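/- arXiv:cs/0207027 — 2 statements merged into one kernel-verified Lean document; each statement's English description precedes it below -/
import Mathlib

section
/- Fix N ≥ 1, l ∈ {0,…,N−1}, and k ∈ {l+1,…,N−1}. For a uniformly random permutation σ of {0,…,N−1}, the probability that OCS(σ) has at least l+1 entries and that the sum s_l of its first l+1 entries equals k is at most (−log(1 − k/N))^l / (l!·N) (with natural logarithm); moreover this probability is 0 when k ≤ l. -/
/-- The set of minimal elements of the cycles of a permutation of `Fin N`
(one per cycle, fixed points included). -/
noncomputable def cycleMins {N : ℕ} (σ : Equiv.Perm (Fin N)) : Finset (Fin N) :=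
  @Finset.filter _ (fun x => ∀ m : ℕ, x ≤ (σ ^ m) x) (Classical.decPred _) Finset.univ

/-- The ordered cycle structure of a permutation of `Fin N`: the list of lengths of its
cycles (fixed points counting as cycles of length 1), listed in increasing order of the
minimal elements of the cycles. -/
noncomputable def OCS {N : ℕ} (σ : Equiv.Perm (Fin N)) : List ℕ :=
  ((cycleMins σ).sort (· ≤ ·)).map fun x => Function.minimalPeriod (⇑σ) x

/-!
Deleting the cycle of `0` (of length `a = s_0`) from `σ` and relabelling the remaining `N - a`
points increasingly gives a permutation of `Fin (N - a)` whose ordered cycle structure is the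
tail of `OCS σ`; `σ` is recovered from it and the `a - 1` other points of the cycle of `0`. So,
writing `p_l(N, k)` for the probability in question, `p_{l+1}(N, k) ≤ N⁻¹ ∑_{a < k} p_l(N - a, k - a)` and `p_0(N, k) ≤ N⁻¹`. By induction
`p_l(N, k) ≤ H ^ l / (l! N)` with `H = ∑_{s=1}^{k-1} 1/(N - s)`, the inductive step being
`(l + 1) ∑_a x_a (∑_{s > a} x_s) ^ l ≤ (∑ x) ^ (l + 1)`; finally `H ≤ log N - log (N - k)`.
-/

open Equiv Function Finset
open scoped Nat

theorem mul_pow_le_add_pow_sub_pow {R : Type*} [CommRing R] [LinearOrder R] [IsStrictOrderedRing R]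
    {x y : R} (hx : 0 ≤ x) (hy : 0 ≤ y) (n : ℕ) :
    (n + 1) * x * y ^ n ≤ (y + x) ^ (n + 1) - y ^ (n + 1) := by
  have hterm : ∀ i ∈ range (n + 1), y ^ n ≤ (y + x) ^ i * y ^ (n - i) := fun i hi => by
    calc y ^ n = y ^ i * y ^ (n - i) := by
          rw [← pow_add, Nat.add_sub_cancel' (Nat.lt_succ_iff.1 (mem_range.1 hi))]
      _ ≤ (y + x) ^ i * y ^ (n - i) := by gcongr; linarith
  calc (n + 1) * x * y ^ n = (∑ _i ∈ range (n + 1), y ^ n) * x := by simp; ring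
    _ ≤ (∑ i ∈ range (n + 1), (y + x) ^ i * y ^ (n - i)) * x := by
        gcongr with i hi; exact hterm i hi
    _ = (y + x) ^ (n + 1) - y ^ (n + 1) := by simpa using geom_sum₂_mul (y + x) y (n + 1)

theorem sum_mul_pow_sum_Ico_succ_le {R : Type*} [CommRing R] [LinearOrder R] [IsStrictOrderedRing R]
    {x : ℕ → R} {j k : ℕ} (hx : ∀ i ∈ Ico j k, 0 ≤ x i) (l : ℕ) :
    (l + 1) * ∑ a ∈ Ico j k, x a * (∑ s ∈ Ico (a + 1) k, x s) ^ l ≤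
      (∑ s ∈ Ico j k, x s) ^ (l + 1) := by
  set T : ℕ → R := fun a => ∑ s ∈ Ico a k, x s
  rcases le_or_gt j k with hjk | hkj
  swap
  · simp [Ico_eq_empty_of_le hkj.le]
  have hstep : ∀ a ∈ Ico j k,
      (l + 1) * (x a * T (a + 1) ^ l) ≤ T a ^ (l + 1) - T (a + 1) ^ (l + 1) := by
    intro a ha
    have hT : T a = T (a + 1) + x a := by
      simp only [T]; rw [sum_eq_sum_Ico_succ_bot (mem_Ico.1 ha).2, add_comm]
    have hT_nonneg : 0 ≤ T (a + 1) :=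
      sum_nonneg fun s hs => hx s (by simp only [mem_Ico] at ha hs ⊢; omega)
    rw [hT, ← mul_assoc]
    exact mul_pow_le_add_pow_sub_pow (hx a ha) hT_nonneg l
  have htelescope := sum_Ico_sub (fun a => -T a ^ (l + 1)) hjk
  simp only [neg_sub_neg, T, Ico_self, sum_empty] at htelescope
  calc (l + 1) * ∑ a ∈ Ico j k, x a * T (a + 1) ^ l
      ≤ ∑ a ∈ Ico j k, (T a ^ (l + 1) - T (a + 1) ^ (l + 1)) := by
        rw [mul_sum]; exact sum_le_sum hstep
    _ = T j ^ (l + 1) := by simpa using htelescope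

theorem inv_le_log_sub_log {m : ℝ} (hm : 1 < m) : m⁻¹ ≤ Real.log m - Real.log (m - 1) := by
  have h := Real.one_sub_inv_le_log_of_pos (x := m / (m - 1)) (by apply div_pos <;> linarith)
  rwa [Real.log_div (by linarith) (by linarith), inv_div, one_sub_div (by linarith),
    sub_sub_cancel, one_div] at h

/-- `H_{N-1} - H_{N-k}` in terms of harmonic numbers: a discrete version of `-log (1 - k / N)`. -/
noncomputable def harmonicDiff (N k : ℕ) : ℝ := ∑ s ∈ Ico 1 k, ((N : ℝ) - s)⁻¹

section harmonicDiff

variable {N k : ℕ}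

theorem inv_sub_nonneg_of_mem_Ico {j s : ℕ} (hk : k ≤ N) (hs : s ∈ Ico j k) :
    0 ≤ ((N : ℝ) - s)⁻¹ := by
  have : (s : ℝ) < N := by exact_mod_cast (mem_Ico.1 hs).2.trans_le hk
  exact inv_nonneg.2 (by linarith)

theorem harmonicDiff_nonneg (hk : k ≤ N) : 0 ≤ harmonicDiff N k :=
  sum_nonneg fun _ hs => inv_sub_nonneg_of_mem_Ico hk hs

theorem harmonicDiff_sub {a : ℕ} (ha : a ≤ k) (hk : k ≤ N) :
    harmonicDiff (N - a) (k - a) = ∑ s ∈ Ico (a + 1) k, ((N : ℝ) - s)⁻¹ := by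
  rw [harmonicDiff, show Ico (a + 1) k = Ico (1 + a) (k - a + a) by
    rw [Nat.sub_add_cancel ha, add_comm], ← sum_Ico_add]
  refine sum_congr rfl fun s _ => ?_
  rw [Nat.cast_sub (ha.trans hk)]
  push_cast
  ring

theorem harmonicDiff_le_neg_log (hk : k < N) : harmonicDiff N k ≤ -Real.log (1 - k / N) := by
  have hN : (0 : ℝ) < N := by exact_mod_cast (Nat.zero_le k).trans_lt hk
  have hkN : (k : ℝ) < N := by exact_mod_cast hk
  have hterm : ∀ s ∈ Ico 0 k, ((N : ℝ) - s)⁻¹ ≤ Real.log (N - s) - Real.log (N - (s + 1 : ℕ)) := by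
    intro s hs
    have : (s : ℝ) + 1 < N := by exact_mod_cast (show s + 1 < N by simp at hs; omega)
    have h := inv_le_log_sub_log (m := N - s) (by linarith)
    rwa [show (N : ℝ) - s - 1 = N - (s + 1 : ℕ) by push_cast; ring] at h
  have htelescope := sum_Ico_sub (fun s => -Real.log (N - s)) (Nat.zero_le k)
  simp only [neg_sub_neg, Nat.cast_zero, sub_zero] at htelescope
  calc harmonicDiff N k ≤ ∑ s ∈ Ico 0 k, ((N : ℝ) - s)⁻¹ :=
        sum_le_sum_of_subset_of_nonneg (Ico_subset_Ico_left zero_le_one)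
          fun s hs _ => inv_sub_nonneg_of_mem_Ico hk.le hs
    _ ≤ ∑ s ∈ Ico 0 k, (Real.log (N - s) - Real.log (N - (s + 1 : ℕ))) := sum_le_sum hterm
    _ = -Real.log (1 - k / N) := by
      rw [htelescope, one_sub_div hN.ne', Real.log_div (by linarith) hN.ne']
      ring

theorem sum_inv_mul_harmonicDiff_pow_le (hk : k ≤ N) (l : ℕ) :
    (l + 1) * ∑ a ∈ Ico 1 k, ((N : ℝ) - a)⁻¹ * harmonicDiff (N - a) (k - a) ^ l ≤
      harmonicDiff N k ^ (l + 1) := by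
  rw [sum_congr rfl fun a ha => by rw [harmonicDiff_sub (mem_Ico.1 ha).2.le hk]]
  exact sum_mul_pow_sum_Ico_succ_le (fun _ hs => inv_sub_nonneg_of_mem_Ico hk hs) l

end harmonicDiff

theorem Equiv.Perm.minimalPeriod_pos {α : Type*} [Finite α] (σ : Perm α) (x : α) :
    0 < minimalPeriod σ x :=
  (MulAction.minimalPeriod_pos σ x).pos

theorem Equiv.Perm.pow_mod_minimalPeriod_apply {α : Type*} (σ : Perm α) (x : α) (n : ℕ) :
    (σ ^ (n % minimalPeriod σ x)) x = (σ ^ n) x :=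
  MulAction.pow_smul_mod_minimalPeriod σ x n

theorem Equiv.Perm.pow_apply_inj_of_lt_minimalPeriod {α : Type*} {σ : Perm α} {x : α} {i j : ℕ}
    (hi : i < minimalPeriod σ x) (hj : j < minimalPeriod σ x) :
    (σ ^ i) x = (σ ^ j) x ↔ i = j := by
  simpa only [Perm.iterate_eq_pow] using iterate_eq_iterate_iff_of_lt_minimalPeriod hi hj

theorem Function.Semiconj.minimalPeriod_eq {α β : Type*} {fa : α → α} {fb : β → β} {g : α → β}
    (h : Semiconj g fa fb) (hg : Injective g) (x : α) :
    minimalPeriod fb (g x) = minimalPeriod fa x := by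
  refine minimalPeriod_eq_minimalPeriod_iff.2 fun n => ?_
  simp only [IsPeriodicPt, IsFixedPt, ← (h.iterate_right n).eq x, hg.eq_iff]

theorem Function.Semiconj.perm_pow_apply {α β : Type*} {τ : Perm α} {σ : Perm β} {g : α → β}
    (h : Semiconj g τ σ) (n : ℕ) (x : α) : g ((τ ^ n) x) = (σ ^ n) (g x) := by
  simpa only [Perm.iterate_eq_pow] using (h.iterate_right n).eq x

section OCS

variable {m N : ℕ} {τ : Perm (Fin m)} {σ : Perm (Fin N)}

theorem mem_cycleMins {x : Fin N} : x ∈ cycleMins σ ↔ ∀ n : ℕ, x ≤ (σ ^ n) x := by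
  simp [cycleMins]

theorem pos_of_mem_OCS {c : ℕ} (hc : c ∈ OCS σ) : 0 < c := by
  obtain ⟨x, -, rfl⟩ := List.mem_map.1 hc
  exact σ.minimalPeriod_pos x

theorem le_sum_take_OCS {n : ℕ} (hn : n ≤ (OCS σ).length) : n ≤ ((OCS σ).take n).sum := by
  have h := List.length_le_sum_of_one_le ((OCS σ).take n) fun _ hc =>
    pos_of_mem_OCS (List.mem_of_mem_take hc)
  rwa [List.length_take, min_eq_left hn] at h

theorem mem_cycleMins_iff_of_semiconj {e : Fin m ↪o Fin N} (he : Semiconj e τ σ) {y : Fin m} :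
    e y ∈ cycleMins σ ↔ y ∈ cycleMins τ := by
  simp only [mem_cycleMins, ← he.perm_pow_apply, e.le_iff_le]

theorem OCS_eq_of_semiconj {e : Fin m ↪o Fin N} (he : Semiconj e τ σ) :
    OCS τ = ((cycleMins τ).map e.toEmbedding).sort.map (minimalPeriod σ) := by
  rw [OCS, ← StrictMonoOn.map_finsetSort e.toEmbedding _ (e.strictMono.strictMonoOn _),
    List.map_map]
  exact List.map_congr_left fun y _ => (he.minimalPeriod_eq e.injective y).symm

end OCS

section ZeroCycle

variable {N : ℕ} [NeZero N]

noncomputable def zeroCycle (σ : Perm (Fin N)) : Finset (Fin N) :=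
  (range (minimalPeriod σ 0)).image fun n => (σ ^ n) 0

variable {σ : Perm (Fin N)}

theorem mem_zeroCycle {x : Fin N} : x ∈ zeroCycle σ ↔ σ.SameCycle 0 x := by
  constructor
  · intro hx
    obtain ⟨n, -, rfl⟩ := mem_image.1 hx
    exact ⟨n, by simp⟩
  · intro hx
    obtain ⟨n, rfl⟩ := hx.exists_nat_pow_eq
    exact mem_image.2 ⟨n % minimalPeriod σ 0,
      mem_range.2 (Nat.mod_lt _ (σ.minimalPeriod_pos 0)), σ.pow_mod_minimalPeriod_apply 0 n⟩

theorem card_compl_zeroCycle : #(zeroCycle σ)ᶜ = N - minimalPeriod σ 0 := by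
  rw [card_compl, Fintype.card_fin, zeroCycle, card_image_of_injOn, card_range]
  exact fun i hi j hj =>
    (Perm.pow_apply_inj_of_lt_minimalPeriod (mem_range.1 hi) (mem_range.1 hj)).1

theorem eq_zero_of_mem_cycleMins_of_mem_zeroCycle {x : Fin N} (hmin : x ∈ cycleMins σ)
    (hx : x ∈ zeroCycle σ) : x = 0 := by
  obtain ⟨n, hn⟩ := (mem_zeroCycle.1 hx).symm.exists_nat_pow_eq
  exact nonpos_iff_eq_zero.1 (hn ▸ mem_cycleMins.1 hmin n)

theorem apply_mem_compl_zeroCycle {x : Fin N} : σ x ∈ (zeroCycle σ)ᶜ ↔ x ∈ (zeroCycle σ)ᶜ := by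
  simp only [mem_compl, mem_zeroCycle, Perm.sameCycle_apply_right]

variable (σ) in
/-- The relabelling is increasing so that the order of the cycle minima, which `OCS` sees, is kept.
The value is the identity (junk) unless `a` is the length of the cycle of `0`. -/
noncomputable def restrictCompl (a : ℕ) : Perm (Fin (N - a)) :=
  if h : #(zeroCycle σ)ᶜ = N - a then
    ((zeroCycle σ)ᶜ.orderIsoOfFin h).symm.toEquiv.permCongr
      (σ.subtypePerm fun _ => apply_mem_compl_zeroCycle)
  else 1

theorem semiconj_restrictCompl {a : ℕ} {s : Finset (Fin N)} (hs : (zeroCycle σ)ᶜ = s)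
    (h : #s = N - a) : Semiconj (s.orderEmbOfFin h) (restrictCompl σ a) σ := by
  subst hs
  intro y
  simp only [restrictCompl, h, dite_true, Equiv.permCongr_apply]
  rw [← coe_orderIsoOfFin_apply, ← coe_orderIsoOfFin_apply]
  simp

theorem OCS_eq_cons : OCS σ = minimalPeriod σ 0 :: OCS (restrictCompl σ (minimalPeriod σ 0)) := by
  set e := (zeroCycle σ)ᶜ.orderEmbOfFin card_compl_zeroCycle
  have he : Semiconj e (restrictCompl σ _) σ := semiconj_restrictCompl rfl _
  have hmins : cycleMins σ = insert 0 ((cycleMins (restrictCompl σ _)).map e.toEmbedding) := by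
    ext x
    simp only [mem_insert, mem_map]
    constructor
    · intro hx
      by_cases hx0 : x ∈ zeroCycle σ
      · exact Or.inl (eq_zero_of_mem_cycleMins_of_mem_zeroCycle hx hx0)
      · obtain ⟨y, rfl⟩ : x ∈ Set.range e := by rw [range_orderEmbOfFin]; simpa using hx0
        exact Or.inr ⟨y, (mem_cycleMins_iff_of_semiconj he).1 hx, rfl⟩
    · rintro (rfl | ⟨y, hy, rfl⟩)
      · exact mem_cycleMins.2 fun _ => Fin.zero_le _
      · exact (mem_cycleMins_iff_of_semiconj he).2 hy
  have h0 : (0 : Fin N) ∉ (cycleMins (restrictCompl σ _)).map e.toEmbedding := by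
    simp only [mem_map, not_exists, not_and]
    intro y _ hy
    have : e y ∈ (zeroCycle σ)ᶜ := orderEmbOfFin_mem _ _ y
    rw [show e y = 0 from hy, mem_compl, mem_zeroCycle] at this
    exact this (Perm.SameCycle.refl _ _)
  rw [OCS, hmins, sort_insert _ (fun _ _ => Fin.zero_le _) h0, List.map_cons,
    OCS_eq_of_semiconj he]

variable (σ) in
noncomputable def zeroCycleEmbedding {a : ℕ} (h : minimalPeriod σ 0 = a) :
    Fin (a - 1) ↪ {x : Fin N // x ≠ 0} where
  toFun i := ⟨(σ ^ ((i : ℕ) + 1)) 0, fun h0 => by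
    have hi := i.isLt
    have := (Perm.pow_apply_inj_of_lt_minimalPeriod (σ := σ) (x := 0) (i := i + 1) (j := 0)
      (by omega) (by omega)).1 (by simpa using h0)
    omega⟩
  inj' i j hij := Fin.ext <| by
    have hi := i.isLt
    have hj := j.isLt
    have := (Perm.pow_apply_inj_of_lt_minimalPeriod (σ := σ) (x := 0) (i := i + 1) (j := j + 1)
      (by omega) (by omega)).1 (congrArg Subtype.val hij)
    omega

theorem eq_of_pow_apply_zero_eq_of_restrictCompl_eq {σ' : Perm (Fin N)} {a : ℕ}
    (h : minimalPeriod σ 0 = a) (h' : minimalPeriod σ' 0 = a)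
    (hpow : ∀ n < a, (σ ^ n) 0 = (σ' ^ n) 0) (hrestr : restrictCompl σ a = restrictCompl σ' a) :
    σ = σ' := by
  have hpow' : ∀ n, (σ ^ n) 0 = (σ' ^ n) 0 := fun n => by
    rw [← σ.pow_mod_minimalPeriod_apply, ← σ'.pow_mod_minimalPeriod_apply, h, h',
      hpow _ (Nat.mod_lt _ (h ▸ σ.minimalPeriod_pos 0))]
  have hcycle : zeroCycle σ = zeroCycle σ' := by simp only [zeroCycle, h, h', hpow']
  have hcard : #(zeroCycle σ)ᶜ = N - a := h ▸ card_compl_zeroCycle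
  ext1 x
  by_cases hx : x ∈ zeroCycle σ
  · obtain ⟨n, -, rfl⟩ := mem_image.1 hx
    calc σ ((σ ^ n) 0) = (σ ^ (n + 1)) 0 := by rw [pow_succ', Perm.mul_apply]
      _ = (σ' ^ (n + 1)) 0 := hpow' _
      _ = σ' ((σ ^ n) 0) := by rw [pow_succ', Perm.mul_apply, hpow']
  · obtain ⟨y, rfl⟩ : x ∈ Set.range ((zeroCycle σ)ᶜ.orderEmbOfFin hcard) := by
      rw [range_orderEmbOfFin]; simpa using hx
    rw [← semiconj_restrictCompl rfl hcard y, hrestr,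
      semiconj_restrictCompl (by rw [hcycle]) hcard y]

theorem card_minimalPeriod_eq_and_le (a : ℕ) (Q : Perm (Fin (N - a)) → Prop) :
    Nat.card {σ : Perm (Fin N) // minimalPeriod σ 0 = a ∧ Q (restrictCompl σ a)} ≤
      (N - 1).descFactorial (a - 1) * Nat.card {τ // Q τ} := by
  classical
  let encode : {σ : Perm (Fin N) // minimalPeriod σ 0 = a ∧ Q (restrictCompl σ a)} →
      (Fin (a - 1) ↪ {x : Fin N // x ≠ 0}) × {τ // Q τ} :=
    fun σ => (zeroCycleEmbedding σ.1 σ.2.1, ⟨restrictCompl σ.1 a, σ.2.2⟩)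
  have hencode : Injective encode := by
    rintro ⟨σ, h, _⟩ ⟨σ', h', _⟩ hcode
    obtain ⟨hemb, hrestr⟩ := Prod.ext_iff.1 hcode
    refine Subtype.ext (eq_of_pow_apply_zero_eq_of_restrictCompl_eq h h' (fun n hn => ?_)
      (congrArg Subtype.val hrestr))
    cases n with
    | zero => rfl
    | succ n => exact congrArg Subtype.val (DFunLike.congr_fun hemb ⟨n, by omega⟩)
  calc _ ≤ Nat.card ((Fin (a - 1) ↪ {x : Fin N // x ≠ 0}) × {τ // Q τ}) :=
        Nat.card_le_card_of_injective encode hencode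
    _ = _ := by
      rw [Nat.card_prod, Nat.card_eq_fintype_card (α := Fin _ ↪ _), Fintype.card_embedding_eq]
      simp

theorem card_minimalPeriod_eq_and_div_le {a : ℕ} (ha : 0 < a) (haN : a ≤ N)
    (Q : Perm (Fin (N - a)) → Prop) :
    (Nat.card {σ : Perm (Fin N) // minimalPeriod σ 0 = a ∧ Q (restrictCompl σ a)} : ℝ) / N ! ≤
      (N : ℝ)⁻¹ * (Nat.card {τ // Q τ} / (N - a)!) := by
  have hfact : (N - a)! * (N - 1).descFactorial (a - 1) * N = N ! := by
    rw [show N - a = N - 1 - (a - 1) by omega, Nat.factorial_mul_descFactorial (by omega),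
      mul_comm, Nat.mul_factorial_pred (NeZero.ne N)]
  have hdesc : (N - 1).descFactorial (a - 1) ≠ 0 := (Nat.descFactorial_pos.2 (by omega)).ne'
  calc _ ≤ ((N - 1).descFactorial (a - 1) * Nat.card {τ // Q τ} : ℝ) / N ! := by
        gcongr; exact_mod_cast card_minimalPeriod_eq_and_le a Q
    _ = _ := by
      rw [← hfact]
      push_cast
      field_simp

end ZeroCycle

noncomputable def ocsProb (N l k : ℕ) : ℝ :=
  (Nat.card {σ : Perm (Fin N) // l + 1 ≤ (OCS σ).length ∧ ((OCS σ).take (l + 1)).sum = k} : ℝ)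
    / (Nat.factorial N : ℝ)

section ocsProb

variable {N l k : ℕ}

theorem ocsProb_eq_zero_of_le (hk : k ≤ l) : ocsProb N l k = 0 := by
  have : IsEmpty {σ : Perm (Fin N) // l + 1 ≤ (OCS σ).length ∧ ((OCS σ).take (l + 1)).sum = k} :=
    ⟨fun ⟨_, hlen, hsum⟩ => by have := le_sum_take_OCS hlen; omega⟩
  rw [ocsProb, Nat.card_of_isEmpty, Nat.cast_zero, zero_div]

variable [NeZero N]

theorem ocsProb_zero_le (hk : k ≤ N) : ocsProb N 0 k ≤ (N : ℝ)⁻¹ := by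
  rcases Nat.eq_zero_or_pos k with rfl | hk0
  · rw [ocsProb_eq_zero_of_le le_rfl]
    positivity
  have hiff (σ : Perm (Fin N)) : (0 + 1 ≤ (OCS σ).length ∧ ((OCS σ).take (0 + 1)).sum = k) ↔
      minimalPeriod σ 0 = k ∧ True := by
    rw [OCS_eq_cons]
    simp
  calc ocsProb N 0 k
      = (Nat.card {σ : Perm (Fin N) // minimalPeriod σ 0 = k ∧ True} : ℝ) / N ! := by
        rw [ocsProb, Nat.card_congr (Equiv.subtypeEquivRight hiff)]
    _ ≤ (N : ℝ)⁻¹ * (Nat.card {τ : Perm (Fin (N - k)) // True} / (N - k)!) :=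
        card_minimalPeriod_eq_and_div_le hk0 hk fun _ => True
    _ = (N : ℝ)⁻¹ := by
        simp [Nat.card_eq_fintype_card, Fintype.card_perm, Nat.factorial_ne_zero]

theorem ocsProb_succ_le (hk : k ≤ N) :
    ocsProb N (l + 1) k ≤ ∑ a ∈ Ico 1 k, (N : ℝ)⁻¹ * ocsProb (N - a) l (k - a) := by
  classical
  set P : Perm (Fin N) → Prop :=
    fun σ => l + 1 + 1 ≤ (OCS σ).length ∧ ((OCS σ).take (l + 1 + 1)).sum = k
  set Q : (a : ℕ) → Perm (Fin (N - a)) → Prop :=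
    fun a τ => l + 1 ≤ (OCS τ).length ∧ ((OCS τ).take (l + 1)).sum = k - a
  have hfirst (σ : Perm (Fin N)) (hσ : P σ) :
      minimalPeriod σ 0 ∈ Ico 1 k ∧
        Q (minimalPeriod σ 0) (restrictCompl σ (minimalPeriod σ 0)) := by
    obtain ⟨hlen, hsum⟩ := hσ
    rw [OCS_eq_cons, List.length_cons] at hlen
    rw [OCS_eq_cons, List.take_succ_cons, List.sum_cons] at hsum
    have := le_sum_take_OCS (Nat.le_of_succ_le_succ hlen)
    have := σ.minimalPeriod_pos 0
    exact ⟨mem_Ico.2 ⟨this, by omega⟩, by omega, by omega⟩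
  have hcard : Nat.card {σ // P σ} ≤
      ∑ a ∈ Ico 1 k,
        Nat.card {σ : Perm (Fin N) // minimalPeriod σ 0 = a ∧ Q a (restrictCompl σ a)} := by
    simp only [Nat.card_eq_fintype_card, Fintype.card_subtype]
    calc #(univ.filter P)
        = ∑ a ∈ Ico 1 k, #((univ.filter P).filter fun σ : Perm (Fin N) => minimalPeriod σ 0 = a) :=
          card_eq_sum_card_fiberwise fun σ hσ => (hfirst σ (mem_filter.1 hσ).2).1
      _ ≤ _ := sum_le_sum fun a _ => card_le_card fun σ hσ => ?_
    simp only [mem_filter, mem_univ, true_and] at hσ ⊢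
    exact ⟨hσ.2, hσ.2 ▸ (hfirst σ hσ.1).2⟩
  calc ocsProb N (l + 1) k
      ≤ (∑ a ∈ Ico 1 k, Nat.card {σ : Perm (Fin N) //
          minimalPeriod σ 0 = a ∧ Q a (restrictCompl σ a)} : ℝ) / N ! := by
        rw [ocsProb]; gcongr; exact_mod_cast hcard
    _ = ∑ a ∈ Ico 1 k, (Nat.card {σ : Perm (Fin N) //
          minimalPeriod σ 0 = a ∧ Q a (restrictCompl σ a)} : ℝ) / N ! := by
        rw [sum_div]
    _ ≤ ∑ a ∈ Ico 1 k, (N : ℝ)⁻¹ * ocsProb (N - a) l (k - a) :=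
        sum_le_sum fun a ha => card_minimalPeriod_eq_and_div_le (mem_Ico.1 ha).1
          ((mem_Ico.1 ha).2.le.trans hk) (Q a)

theorem ocsProb_le (hk : k ≤ N) : ocsProb N l k ≤ harmonicDiff N k ^ l / (l ! * N) := by
  induction l generalizing N k with
  | zero => simpa using ocsProb_zero_le hk
  | succ l ih =>
    calc ocsProb N (l + 1) k
        ≤ ∑ a ∈ Ico 1 k, (N : ℝ)⁻¹ * ocsProb (N - a) l (k - a) := ocsProb_succ_le hk
      _ ≤ ∑ a ∈ Ico 1 k, (N : ℝ)⁻¹ *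
            (harmonicDiff (N - a) (k - a) ^ l / (l ! * ((N - a : ℕ) : ℝ))) := by
          gcongr with a ha
          have : NeZero (N - a) := ⟨by simp only [mem_Ico] at ha; omega⟩
          exact ih (by omega)
      _ = ((N : ℝ) * l !)⁻¹ *
            ∑ a ∈ Ico 1 k, ((N : ℝ) - a)⁻¹ * harmonicDiff (N - a) (k - a) ^ l := by
          rw [mul_sum]
          refine sum_congr rfl fun a ha => ?_
          rw [Nat.cast_sub ((mem_Ico.1 ha).2.le.trans hk)]
          field_simp
      _ ≤ ((N : ℝ) * l !)⁻¹ * (harmonicDiff N k ^ (l + 1) / (l + 1)) := by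
          gcongr
          rw [le_div_iff₀ (by positivity), mul_comm]
          exact sum_inv_mul_harmonicDiff_pow_le hk l
      _ = harmonicDiff N k ^ (l + 1) / ((l + 1)! * N) := by
          rw [Nat.factorial_succ]
          push_cast
          field_simp

end ocsProb

theorem stmt_9_general (N l : ℕ) :
    (∀ k : ℕ, l + 1 ≤ k → k ≤ N - 1 →
      (Nat.card {σ : Equiv.Perm (Fin N) //
            l + 1 ≤ (OCS σ).length ∧ ((OCS σ).take (l + 1)).sum = k} : ℝ)
          / (Nat.factorial N : ℝ)
        ≤ (-Real.log (1 - (k : ℝ) / N)) ^ l / ((Nat.factorial l : ℝ) * N)) ∧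
    (∀ k : ℕ, k ≤ l →
      (Nat.card {σ : Equiv.Perm (Fin N) //
            l + 1 ≤ (OCS σ).length ∧ ((OCS σ).take (l + 1)).sum = k} : ℝ)
          / (Nat.factorial N : ℝ) = 0) := by
  refine ⟨fun k hlk hkN => ?_, fun k hkl => ocsProb_eq_zero_of_le hkl⟩
  have : NeZero N := ⟨by omega⟩
  calc ocsProb N l k ≤ harmonicDiff N k ^ l / (l ! * N) := ocsProb_le (by omega)
    _ ≤ (-Real.log (1 - (k : ℝ) / N)) ^ l / (l ! * N) := by
      gcongr
      · exact harmonicDiff_nonneg (by omega)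
      · exact harmonicDiff_le_neg_log (by omega)

/-- For a uniformly random permutation of `{0,…,N−1}` and `l ≤ N−1`: for
`k ∈ {l+1,…,N−1}` the probability that the ordered cycle structure has at least `l+1`
entries whose sum `s_l` equals `k` is at most `(−log(1−k/N))^l / (l!·N)`; moreover this
probability is `0` whenever `k ≤ l`. -/
theorem stmt_9 (N l : ℕ) (hN : 1 ≤ N) (hl : l ≤ N - 1) :
    (∀ k : ℕ, l + 1 ≤ k → k ≤ N - 1 →
      (Nat.card {σ : Equiv.Perm (Fin N) //
            l + 1 ≤ (OCS σ).length ∧ ((OCS σ).take (l + 1)).sum = k} : ℝ)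
          / (Nat.factorial N : ℝ)
        ≤ (-Real.log (1 - (k : ℝ) / N)) ^ l / ((Nat.factorial l : ℝ) * N)) ∧
    (∀ k : ℕ, k ≤ l →
      (Nat.card {σ : Equiv.Perm (Fin N) //
            l + 1 ≤ (OCS σ).length ∧ ((OCS σ).take (l + 1)).sum = k} : ℝ)
          / (Nat.factorial N : ℝ) = 0) :=
  stmt_9_general N l
end

section
/- Fix a real constant c > e². Let p(N) denote the probability that a uniformly random permutation of {0,…,N−1} has more than c·log N cycles (natural logarithm, fixed points counting as cycles). Then p(N) = o(1/N^c) as N → ∞. -/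
/-!
Chernoff bound for the number of cycles. Inserting the new element `0` of `Fin (N + 1)` either
as a fixed point or just before one of the `N` old elements in its cycle gives
`∑ σ, x ^ cycleCount σ = x (x + 1) ⋯ (x + N - 1) ≤ N! e ^ ((x - 1) H_N)`. With `x = e²` and
Markov's inequality, the proportion of permutations with more than `c log N` cycles is at most
`e ^ (e² - 1) N ^ (e² - 1 - 2c)`, which is `o(N ^ (-c))` because `c > e² - 1`.
-/

open Asymptotics Filter

/-- The number of cycles of a permutation of `Fin N`, counting fixed points as cycles of
length 1 (one cycle per minimal element of a cycle). -/
noncomputable def cycleCount {N : ℕ} (σ : Equiv.Perm (Fin N)) : ℕ :=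
  Nat.card {x : Fin N // ∀ m : ℕ, x ≤ (σ ^ m) x}

open Equiv Finset Real
open scoped Nat

namespace Equiv.Perm

variable {α : Type*} [LinearOrder α]

def IsCycleMin (σ : Perm α) (x : α) : Prop := ∀ m : ℕ, x ≤ (σ ^ m) x

theorem IsCycleMin.eq_of_sameCycle [Finite α] {σ : Perm α} {x y : α} (hx : σ.IsCycleMin x)
    (hy : σ.IsCycleMin y) (hxy : σ.SameCycle x y) : x = y := by
  obtain ⟨i, hi⟩ := hxy.exists_nat_pow_eq
  obtain ⟨j, hj⟩ := hxy.symm.exists_nat_pow_eq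
  exact le_antisymm (hi ▸ hx i) (hj ▸ hy j)

theorem exists_isCycleMin_sameCycle [Finite α] (σ : Perm α) (p : α) :
    ∃ x, σ.IsCycleMin x ∧ σ.SameCycle x p := by
  have : Nonempty {y // σ.SameCycle p y} := ⟨⟨p, .refl σ p⟩⟩
  obtain ⟨⟨x, hpx⟩, hmin⟩ :=
    Finite.exists_min (Subtype.val : {y // σ.SameCycle p y} → α)
  exact ⟨x, fun m => hmin ⟨_, hpx.trans ⟨m, by simp⟩⟩, hpx.symm⟩

variable {n : ℕ} (e : Perm (Fin n))

theorem decomposeFin_symm_zero_pow_apply_succ (m : ℕ) (x : Fin n) :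
    (decomposeFin.symm (0, e) ^ m) x.succ = ((e ^ m) x).succ := by
  induction m with
  | zero => rfl
  | succ m ih => simp [pow_succ', ih]

theorem decomposeFin_symm_succ_apply_succ (p x : Fin n) :
    decomposeFin.symm (p.succ, e) x.succ = if e x = p then 0 else (e x).succ := by
  rw [decomposeFin_symm_apply_succ]
  split_ifs with h
  · simp [h]
  · exact swap_apply_of_ne_of_ne (Fin.succ_ne_zero _) (Fin.succ_injective _ |>.ne h)

theorem decomposeFin_symm_succ_pow_apply_succ {p x : Fin n} {m : ℕ}
    (h : ∀ k < m, (e ^ (k + 1)) x ≠ p) :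
    (decomposeFin.symm (p.succ, e) ^ m) x.succ = ((e ^ m) x).succ := by
  induction m with
  | zero => rfl
  | succ m ih =>
    have hm := h m m.lt_succ_self
    rw [pow_succ', mul_apply] at hm
    rw [pow_succ', mul_apply, ih fun k hk => h k (hk.trans m.lt_succ_self),
      decomposeFin_symm_succ_apply_succ, if_neg hm, pow_succ', mul_apply]

theorem isCycleMin_decomposeFin_symm_zero_succ_iff (x : Fin n) :
    (decomposeFin.symm (0, e)).IsCycleMin x.succ ↔ e.IsCycleMin x := by
  simp only [IsCycleMin, decomposeFin_symm_zero_pow_apply_succ, Fin.succ_le_succ_iff]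

theorem isCycleMin_decomposeFin_symm_succ_succ_iff (p x : Fin n) :
    (decomposeFin.symm (p.succ, e)).IsCycleMin x.succ ↔
      e.IsCycleMin x ∧ ¬ e.SameCycle x p := by
  have orbit (hxp : ¬ e.SameCycle x p) (m : ℕ) :
      (decomposeFin.symm (p.succ, e) ^ m) x.succ = ((e ^ m) x).succ :=
    decomposeFin_symm_succ_pow_apply_succ e fun k _ hk =>
      hxp ⟨(k + 1 : ℕ), by rwa [zpow_natCast]⟩
  refine ⟨fun hmin => ?_, fun ⟨hmin, hxp⟩ m => by simpa [orbit hxp] using hmin m⟩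
  have hxp : ¬ e.SameCycle x p := by
    intro hxp
    obtain ⟨i, hi, -, hpow⟩ := hxp.exists_pow_eq''
    have hex : ∃ j, (e ^ (j + 1)) x = p := ⟨i - 1, by rwa [Nat.sub_add_cancel hi]⟩
    have hj := Nat.find_spec hex
    rw [pow_succ', mul_apply] at hj
    -- the orbit of `x.succ` reaches `0` right after the first visit of `e`'s orbit to `p`
    have hzero := hmin (Nat.find hex + 1)
    rw [pow_succ', mul_apply, decomposeFin_symm_succ_pow_apply_succ e
      fun k hk => Nat.find_min hex hk, decomposeFin_symm_succ_apply_succ, if_pos hj] at hzero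
    exact absurd hzero (Fin.succ_pos x).not_ge
  exact ⟨fun m => by simpa [orbit hxp] using hmin m, hxp⟩

end Equiv.Perm

open Equiv.Perm

section CycleCount

open scoped Classical

variable {n : ℕ}

theorem cycleCount_eq_card_filter (σ : Perm (Fin n)) : cycleCount σ = #{x | σ.IsCycleMin x} := by
  rw [cycleCount, Nat.card_eq_fintype_card, Fintype.card_subtype]
  rfl

theorem cycleCount_decomposeFin_symm (p : Fin (n + 1)) (e : Perm (Fin n)) :
    cycleCount (decomposeFin.symm (p, e))
      = #{x : Fin n | (decomposeFin.symm (p, e)).IsCycleMin x.succ} + 1 := by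
  rw [cycleCount_eq_card_filter, Fin.card_filter_univ_succ]
  exact if_pos fun _ => Fin.zero_le _

theorem cycleCount_decomposeFin_symm_zero (e : Perm (Fin n)) :
    cycleCount (decomposeFin.symm (0, e)) = cycleCount e + 1 := by
  simp only [cycleCount_decomposeFin_symm, isCycleMin_decomposeFin_symm_zero_succ_iff,
    cycleCount_eq_card_filter e]

-- `0` joins the cycle of `p` and becomes its minimum; all other cycles keep their minima
theorem cycleCount_decomposeFin_symm_succ (p : Fin n) (e : Perm (Fin n)) :
    cycleCount (decomposeFin.symm (p.succ, e)) = cycleCount e := by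
  obtain ⟨x₀, hx₀⟩ := e.exists_isCycleMin_sameCycle p
  have hsplit := card_filter_add_card_filter_not
    (s := ({x | e.IsCycleMin x} : Finset (Fin n))) (fun x => e.SameCycle x p)
  have hone : #{x ∈ ({x | e.IsCycleMin x} : Finset (Fin n)) | e.SameCycle x p} = 1 := by
    rw [card_eq_one]
    refine ⟨x₀, eq_singleton_iff_unique_mem.mpr ⟨by simpa using hx₀, fun y hy => ?_⟩⟩
    simp only [mem_filter, mem_univ, true_and] at hy
    exact hy.1.eq_of_sameCycle hx₀.1 (hy.2.trans hx₀.2.symm)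
  simp only [cycleCount_decomposeFin_symm, isCycleMin_decomposeFin_symm_succ_succ_iff,
    cycleCount_eq_card_filter e, filter_filter] at hsplit hone ⊢
  omega

end CycleCount

theorem sum_pow_cycleCount {R : Type*} [CommSemiring R] (x : R) (n : ℕ) :
    ∑ σ : Perm (Fin n), x ^ cycleCount σ = ∏ i ∈ range n, (x + i) := by
  induction n with
  | zero => simp [cycleCount]
  | succ n ih =>
    rw [← decomposeFin.symm.sum_comp, Fintype.sum_prod_type, Fin.sum_univ_succ, prod_range_succ,
      ← ih]
    simp only [cycleCount_decomposeFin_symm_zero, cycleCount_decomposeFin_symm_succ, pow_succ,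
      sum_const, card_univ, Fintype.card_fin, nsmul_eq_mul, ← sum_mul]
    ring

theorem prod_add_natCast_le_factorial_mul_exp {x : ℝ} (hx : 1 ≤ x) (N : ℕ) :
    ∏ i ∈ range N, (x + i) ≤ N ! * exp ((x - 1) * (1 + log N)) := by
  have hfactor (i : ℕ) : x + i ≤ (i + 1) * exp ((x - 1) * ((i : ℝ) + 1)⁻¹) := by
    have hi : (0 : ℝ) < i + 1 := by positivity
    calc x + i = (i + 1) * ((x - 1) * ((i : ℝ) + 1)⁻¹ + 1) := by field_simp; ring
      _ ≤ _ := by gcongr; exact add_one_le_exp _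
  have hharmonic : ∏ i ∈ range N, ((i : ℝ) + 1) * exp ((x - 1) * ((i : ℝ) + 1)⁻¹)
      = N ! * exp ((x - 1) * harmonic N) := by
    rw [prod_mul_distrib, ← exp_sum, ← mul_sum, harmonic, ← prod_range_add_one_eq_factorial]
    push_cast
    rfl
  calc ∏ i ∈ range N, (x + i)
      ≤ ∏ i ∈ range N, ((i : ℝ) + 1) * exp ((x - 1) * ((i : ℝ) + 1)⁻¹) :=
        prod_le_prod (fun i _ => by positivity) fun i _ => hfactor i
    _ = N ! * exp ((x - 1) * harmonic N) := hharmonic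
    _ ≤ N ! * exp ((x - 1) * (1 + log N)) := by
        gcongr
        exact harmonic_le_one_add_log N

theorem card_filter_lt_mul_exp_le_sum {ι : Type*} (s : Finset ι) (f : ι → ℝ) {a : ℝ}
    (ha : 0 ≤ a) (t : ℝ) : #{i ∈ s | t < f i} * exp (a * t) ≤ ∑ i ∈ s, exp (a * f i) :=
  calc #{i ∈ s | t < f i} * exp (a * t) ≤ ∑ i ∈ s with t < f i, exp (a * f i) := by
        rw [← nsmul_eq_mul]
        exact card_nsmul_le_sum _ _ _ fun i hi => by
          gcongr; exact (mem_filter.mp hi).2.le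
    _ ≤ ∑ i ∈ s, exp (a * f i) :=
        sum_le_sum_of_subset_of_nonneg (filter_subset _ _) fun _ _ _ => (exp_pos _).le

theorem card_cycleCount_gt_div_factorial_le {a : ℝ} (ha : 0 ≤ a) (c : ℝ) {N : ℕ}
    (hN : 0 < N) :
    (Nat.card {σ : Perm (Fin N) // c * log N < cycleCount σ} : ℝ) / N !
      ≤ exp (exp a - 1) * (N : ℝ) ^ (exp a - 1 - a * c) := by
  classical
  have hT : Nat.card {σ : Perm (Fin N) // c * log N < cycleCount σ}
      = #{σ : Perm (Fin N) | c * log N < cycleCount σ} := by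
    rw [Nat.card_eq_fintype_card, Fintype.card_subtype]
  have hsum : ∑ σ : Perm (Fin N), exp (a * cycleCount σ) = ∏ i ∈ range N, (exp a + i) := by
    simp_rw [mul_comm a, exp_nat_mul]
    exact sum_pow_cycleCount _ N
  have hchernoff :=
    (card_filter_lt_mul_exp_le_sum univ (fun σ : Perm (Fin N) => (cycleCount σ : ℝ)) ha
      (c * log N)).trans
    (hsum.trans_le (prod_add_natCast_le_factorial_mul_exp (one_le_exp ha) N))
  have hrhs : exp (exp a - 1) * (N : ℝ) ^ (exp a - 1 - a * c) * N ! * exp (a * (c * log N))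
      = N ! * exp ((exp a - 1) * (1 + log N)) := by
    rw [rpow_def_of_pos (by exact_mod_cast hN), mul_right_comm, mul_comm, ← exp_add, ← exp_add]
    ring_nf
  rw [hT, div_le_iff₀ (by positivity)]
  exact le_of_mul_le_mul_right (hchernoff.trans_eq hrhs.symm) (exp_pos _)

theorem isLittleO_rpow_rpow_atTop_of_lt {a b : ℝ} (h : a < b) :
    (fun x : ℝ => x ^ a) =o[atTop] fun x => x ^ b := by
  refine (isLittleO_iff_tendsto' ?_).mpr ?_
  · filter_upwards [eventually_gt_atTop 0] with x hx hx0
    exact absurd hx0 (rpow_pos_of_pos hx b).ne'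
  · refine (tendsto_rpow_neg_atTop (sub_pos.mpr h)).congr' ?_
    filter_upwards [eventually_gt_atTop 0] with x hx
    rw [← rpow_sub hx, neg_sub]

/-- For a fixed constant `c > e²`, the probability that a uniformly random permutation of
`{0,…,N−1}` has more than `c·log N` cycles is `o(1/N^c)`. -/
theorem stmt_12 (c : ℝ) (hc : Real.exp 2 < c) :
    (fun N : ℕ =>
        (Nat.card {σ : Equiv.Perm (Fin N) // c * Real.log N < (cycleCount σ : ℝ)} : ℝ)
          / (Nat.factorial N : ℝ))
      =o[atTop] (fun N : ℕ => 1 / (N : ℝ) ^ c) := by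
  have hexponent : exp 2 - 1 - 2 * c < -c := by linarith
  refine (IsBigO.of_bound (exp (exp 2 - 1)) ?_).trans_isLittleO
    (((isLittleO_rpow_rpow_atTop_of_lt hexponent).comp_tendsto
      tendsto_natCast_atTop_atTop).congr_right fun N => by simp [rpow_neg])
  filter_upwards [eventually_gt_atTop 0] with N hN
  rw [Function.comp_apply]
  rw [norm_of_nonneg (by positivity), norm_of_nonneg (by positivity)]
  exact card_cycleCount_gt_div_factorial_le zero_le_two c hN
end
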